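/- Let $G$ be an infinite amenable group acting on finite sets $(\Omega_n)_{n \ge 1}$ with $|\Omega_n| \to \infty$, and fix a finite symmetric set $S \subseteq G$. Then $\liminf_{n\to\infty} h_{ver}(\mathrm{Sch}(G \circlearrowright \Omega_n, S)) = 0$; in particular the Schreier graphs $(\mathrm{Sch}(G \circlearrowright \Omega_n, S))_{n\ge 1}$ are not a sequence of expanders. -/

import Mathlib

open Pointwise Filter

/-- A `G`-invariant mean on `Ω`: a finitely additive probability measure on all subsets
of `Ω` which is invariant under the `G`-action. -/
def IsInvariantMean (G Ω : Type*) [Group G] [MulAction G Ω] (m : Set Ω → ℝ) : Prop :=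
  m Set.univ = 1 ∧ (∀ A : Set Ω, 0 ≤ m A) ∧
    (∀ A B : Set Ω, Disjoint A B → m (A ∪ B) = m A + m B) ∧
    (∀ (g : G) (A : Set Ω), m (g • A) = m A)

/-- The vertex isoperimetric number of the Schreier graph `Sch(G ↷ Ω, S)`:
the infimum of `|XS \ X| / |X|` over nonempty `X ⊆ Ω` with `|X| ≤ |Ω|/2`. -/
noncomputable def schreierIso (G : Type*) (Ω : Type*) [Group G] [MulAction G Ω]
    [Finite Ω] (S : Set G) : ℝ :=
  sInf {r | ∃ X : Set Ω, X.Nonempty ∧ 2 * Nat.card ↥X ≤ Nat.card Ω ∧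
    r = (Nat.card ↥({y | ∃ x ∈ X, ∃ s ∈ S, y = s • x} \ X) : ℝ) / (Nat.card ↥X : ℝ)}

/-!
If every finite `F ⊆ G` had `|SF \ F| > ε|F|`, a power `K` of `{1} ∪ S` would satisfy
`|KA| ≥ 2|A|` for all finite `A`; Hall's theorem turns this into an injective map
`G × Bool → G` moving each point by an element of `K`, i.e. a paradoxical decomposition of `G`
into finitely many pieces, and an invariant mean would then give `2 ≤ 1`. So there are Følner
sets `F`. Pushing the counting measure of `F` forward along `g ↦ g • ω` and cutting it into
level sets gives subsets of `Ωₙ` whose sizes add up to `|F|` and whose boundaries add up to at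
most `|SF \ F|` (coarea formula); one of them is a Følner set of `Ωₙ`, of size at most
`|F| ≤ |Ωₙ| / 2` once `n` is large.
-/

open Finset

namespace IsInvariantMean

variable {G α : Type*} [Group G] [MulAction G α] {m : Set α → ℝ}

theorem measure_empty (hm : IsInvariantMean G α m) : m ∅ = 0 := by
  have h := hm.2.2.1 ∅ ∅ disjoint_bot_left
  rw [Set.union_empty] at h
  linarith

theorem le_one (hm : IsInvariantMean G α m) (A : Set α) : m A ≤ 1 := by
  have h := hm.2.2.1 A Aᶜ disjoint_compl_right
  rw [Set.union_compl_self, hm.1] at h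
  linarith [hm.2.1 Aᶜ]

theorem measure_biUnion_finset (hm : IsInvariantMean G α m) {ι : Type*} {t : Finset ι}
    {A : ι → Set α} (hA : (t : Set ι).PairwiseDisjoint A) :
    m (⋃ i ∈ t, A i) = ∑ i ∈ t, m (A i) := by
  classical
  induction t using Finset.induction_on with
  | empty => simp [hm.measure_empty]
  | insert a s ha ih =>
    rw [coe_insert, Set.pairwiseDisjoint_insert_of_notMem ha] at hA
    rw [set_biUnion_insert, sum_insert ha, hm.2.2.1 _ _ ?_, ih hA.1]
    exact Set.disjoint_iUnion₂_right.2 hA.2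

/-- An invariant mean rules out paradoxical decompositions: `α` cannot be moved piecewise, by
finitely many group elements, injectively onto `card ι` disjoint copies of itself. -/
theorem card_le_one_of_injective {ι : Type*} [Fintype ι] (hm : IsInvariantMean G α m)
    (K : Finset G) (κ : α × ι → G) (hκK : ∀ p, κ p ∈ K)
    (hκ : Function.Injective fun p => κ p • p.1) : Fintype.card ι ≤ 1 := by
  let piece : G × ι → Set α := fun q => {x | κ (x, q.2) = q.1}
  have hcover : ∀ i, ∑ k ∈ K, m (piece (k, i)) = 1 := by
    intro i
    rw [← hm.measure_biUnion_finset fun k _ l _ hkl => Set.disjoint_left.2 fun x hk hl =>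
      hkl (hk.symm.trans hl), ← hm.1]
    congr 1
    ext x
    simpa [piece] using hκK (x, i)
  have hdisj :
      ((K ×ˢ univ : Finset (G × ι)) : Set (G × ι)).PairwiseDisjoint fun q => q.1 • piece q := by
    rintro q - r - hqr
    refine Set.disjoint_left.2 ?_
    rintro _ ⟨x, hx, rfl⟩ ⟨y, hy, hxy⟩
    simp only [piece, Set.mem_ofPred_eq] at hx hy
    have h := @hκ (y, r.2) (x, q.2) (by simp only [hx, hy]; exact hxy)
    simp only [Prod.mk.injEq] at h
    obtain ⟨rfl, hr⟩ := h
    rw [hr] at hy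
    exact hqr (Prod.ext (hx.symm.trans hy) hr.symm)
  have hsum : (Fintype.card ι : ℝ) = ∑ q ∈ K ×ˢ univ, m (q.1 • piece q) := by
    simp [sum_product_right, hm.2.2.2, hcover]
  exact_mod_cast hsum.trans_le <|
    (hm.measure_biUnion_finset hdisj).symm.trans_le (hm.le_one _)

end IsInvariantMean

section Folner

variable {G α : Type*} [Group G] [MulAction G α] [DecidableEq α]

theorem exists_card_le_card_smul_of_expanding {S : Finset G} {c : ℝ} (hc : 1 < c)
    (hS : ∀ A : Finset α, c * #A ≤ #(S • A)) (r : ℝ) :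
    ∃ K : Finset G, ∀ A : Finset α, r * #A ≤ #(K • A) := by
  classical
  have hpow : ∀ j : ℕ, ∃ K : Finset G, ∀ A : Finset α, c ^ j * #A ≤ #(K • A) := by
    intro j
    induction j with
    | zero => exact ⟨1, by simp⟩
    | succ j ih =>
      obtain ⟨K, hK⟩ := ih
      refine ⟨K * S, fun A => ?_⟩
      calc c ^ (j + 1) * #A = c ^ j * (c * #A) := by ring
        _ ≤ c ^ j * #(S • A) := by gcongr; exact hS A
        _ ≤ #(K • S • A) := hK _
        _ = #((K * S) • A) := by rw [mul_smul]
  obtain ⟨j, hj⟩ := pow_unbounded_of_one_lt r hc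
  obtain ⟨K, hK⟩ := hpow j
  exact ⟨K, fun A => (mul_le_mul_of_nonneg_right hj.le (Nat.cast_nonneg _)).trans (hK A)⟩

/-- Hall's marriage theorem for the bipartite graph joining `(a, i)` to the points of `K • a`. -/
theorem exists_injective_of_card_le_card_smul {ι : Type*} [Fintype ι] {K : Finset G}
    (hK : ∀ A : Finset α, Fintype.card ι * #A ≤ #(K • A)) :
    ∃ κ : α × ι → G, (∀ p, κ p ∈ K) ∧ Function.Injective fun p => κ p • p.1 := by
  have hall : ∀ s : Finset (α × ι), #s ≤ #(s.biUnion fun p => K.image (· • p.1)) := by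
    intro s
    have hbiUnion : s.biUnion (fun p => K.image (· • p.1)) = K • s.image Prod.fst := by
      ext x
      simp only [mem_biUnion, mem_image, Finset.mem_smul, Prod.exists]
      constructor
      · rintro ⟨a, i, hai, k, hk, rfl⟩
        exact ⟨k, hk, a, ⟨a, i, hai, rfl⟩, rfl⟩
      · rintro ⟨k, hk, _, ⟨a, i, hai, rfl⟩, rfl⟩
        exact ⟨a, i, hai, k, hk, rfl⟩
    calc #s ≤ #(s.image Prod.fst ×ˢ (univ : Finset ι)) :=
          card_le_card fun p hp => mem_product.2 ⟨mem_image_of_mem _ hp, mem_univ _⟩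
      _ = Fintype.card ι * #(s.image Prod.fst) := by rw [card_product, card_univ, mul_comm]
      _ ≤ _ := hbiUnion ▸ hK _
  obtain ⟨f, hf_inj, hf_mem⟩ := (all_card_le_biUnion_card_iff_exists_injective _).1 hall
  choose κ hκK hκ using fun p => mem_image.1 (hf_mem p)
  exact ⟨κ, hκK, (funext hκ : (fun p => κ p • p.1) = f) ▸ hf_inj⟩

/-- Følner's condition for an action admitting an invariant mean. -/
theorem IsInvariantMean.exists_card_smul_sdiff_le {m : Set α → ℝ}
    (hm : IsInvariantMean G α m) (S : Finset G) {ε : ℝ} (hε : 0 < ε) :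
    ∃ F : Finset α, F.Nonempty ∧ #(S • F \ F) ≤ ε * #F := by
  classical
  by_contra! hS
  have hexpand : ∀ A : Finset α, (1 + ε) * #A ≤ #(({1} ∪ S) • A) := by
    intro A
    obtain rfl | hA := A.eq_empty_or_nonempty
    · simp
    rw [union_smul, singleton_smul, one_smul, union_comm, ← card_sdiff_add_card, Nat.cast_add]
    linarith [hS A hA]
  obtain ⟨K, hK⟩ := exists_card_le_card_smul_of_expanding (by linarith) hexpand 2
  obtain ⟨κ, hκK, hκ⟩ :=
    exists_injective_of_card_le_card_smul (α := α) (ι := Bool) (K := K) fun A => by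
      exact_mod_cast hK A
  simpa using hm.card_le_one_of_injective K κ hκK hκ

end Folner

section LevelSet

variable {G β Ω : Type*} [Group G] [MulAction G β] [MulAction G Ω] [Fintype Ω] [DecidableEq Ω]
  (π : β → Ω)

/-- The `t`-th level set of the push-forward along `π` of the counting measure on `F`. -/
def levelSet (F : Finset β) (t : ℕ) : Finset Ω :=
  {y | t ≤ #{b ∈ F | π b = y}}

variable {π}

theorem levelSet_mono {F F' : Finset β} (h : F ⊆ F') (t : ℕ) :
    levelSet π F t ⊆ levelSet π F' t := fun y hy => by
  simp only [levelSet, mem_filter, mem_univ, true_and] at hy ⊢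
  exact hy.trans (card_le_card (filter_subset_filter _ h))

theorem sum_card_levelSet (F : Finset β) {N : ℕ} (hN : #F ≤ N) :
    ∑ t ∈ Icc 1 N, #(levelSet π F t) = #F := by
  calc ∑ t ∈ Icc 1 N, #(levelSet π F t)
      = ∑ y, #{t ∈ Icc 1 N | t ≤ #{b ∈ F | π b = y}} := by
        simp only [levelSet, card_filter]
        exact sum_comm
    _ = ∑ y, #{b ∈ F | π b = y} := by
        refine sum_congr rfl fun y _ => ?_
        have hle : #{b ∈ F | π b = y} ≤ N := (card_filter_le _ _).trans hN
        have hIcc : {t ∈ Icc 1 N | t ≤ #{b ∈ F | π b = y}} = Icc 1 #{b ∈ F | π b = y} := by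
          ext t
          simp only [mem_filter, mem_Icc]
          omega
        rw [hIcc, Nat.card_Icc, Nat.add_sub_cancel]
    _ = #F := (card_eq_sum_card_fiberwise fun _ _ => mem_coe.2 (mem_univ _)).symm

variable [DecidableEq β]

theorem smul_levelSet_subset (hπ : ∀ (g : G) b, π (g • b) = g • π b) (S : Finset G)
    (F : Finset β) (t : ℕ) : S • levelSet π F t ⊆ levelSet π (S • F) t := by
  intro y hy
  obtain ⟨s, hs, x, hx, rfl⟩ := Finset.mem_smul.1 hy
  simp only [levelSet, mem_filter, mem_univ, true_and] at hx ⊢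
  refine hx.trans (card_le_card_of_injOn (s • ·) ?_ (MulAction.injective s).injOn)
  intro b hb
  simp only [coe_filter, Set.mem_ofPred_eq] at hb ⊢
  exact ⟨smul_mem_smul hs hb.1, by rw [hπ, hb.2]⟩

/-- The coarea inequality. -/
theorem sum_card_smul_levelSet_sdiff_le (hπ : ∀ (g : G) b, π (g • b) = g • π b)
    (S : Finset G) (F : Finset β) :
    ∑ t ∈ Icc 1 #F, #(S • levelSet π F t \ levelSet π F t) ≤ #(S • F \ F) := by
  set F' := S • F ∪ F
  have hFF' : F ⊆ F' := subset_union_right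
  have hsdiff : ∑ t ∈ Icc 1 #F', #(levelSet π F' t \ levelSet π F t) = #(S • F \ F) := by
    have hsplit : ∑ t ∈ Icc 1 #F', #(levelSet π F' t \ levelSet π F t) +
        ∑ t ∈ Icc 1 #F', #(levelSet π F t) = ∑ t ∈ Icc 1 #F', #(levelSet π F' t) := by
      rw [← sum_add_distrib]
      exact sum_congr rfl fun t _ => card_sdiff_add_card_eq_card (levelSet_mono hFF' t)
    have hF := sum_card_levelSet (π := π) F (card_le_card hFF')
    have hF' := sum_card_levelSet (π := π) F' le_rfl
    have hunion : #(S • F \ F) + #F = #F' := card_sdiff_add_card _ _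
    omega
  calc ∑ t ∈ Icc 1 #F, #(S • levelSet π F t \ levelSet π F t)
      ≤ ∑ t ∈ Icc 1 #F, #(levelSet π F' t \ levelSet π F t) :=
        sum_le_sum fun t _ => card_le_card <| sdiff_subset_sdiff
          ((smul_levelSet_subset hπ S F t).trans (levelSet_mono subset_union_left t)) le_rfl
    _ ≤ ∑ t ∈ Icc 1 #F', #(levelSet π F' t \ levelSet π F t) :=
        sum_le_sum_of_subset_of_nonneg (Icc_subset_Icc le_rfl (card_le_card hFF'))
          fun _ _ _ => Nat.zero_le _
    _ = #(S • F \ F) := hsdiff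

theorem exists_card_smul_sdiff_le_of_card_smul_sdiff_le
    (hπ : ∀ (g : G) b, π (g • b) = g • π b) (S : Finset G) {F : Finset β} (hF : F.Nonempty)
    {ε : ℝ} (hfol : #(S • F \ F) ≤ ε * #F) :
    ∃ X : Finset Ω, X.Nonempty ∧ #X ≤ #F ∧ #(S • X \ X) ≤ ε * #X := by
  set T := {t ∈ Icc 1 #F | (levelSet π F t).Nonempty}
  have hT : T.Nonempty := by
    obtain ⟨b, hb⟩ := id hF
    refine ⟨1, mem_filter.2 ⟨mem_Icc.2 ⟨le_rfl, hF.card_pos⟩, π b, ?_⟩⟩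
    simp only [levelSet, mem_filter, mem_univ, true_and, one_le_card]
    exact ⟨b, mem_filter.2 ⟨hb, rfl⟩⟩
  have havg : ∑ t ∈ T, (#(S • levelSet π F t \ levelSet π F t) : ℝ) ≤
      ∑ t ∈ T, ε * #(levelSet π F t) := by
    calc ∑ t ∈ T, (#(S • levelSet π F t \ levelSet π F t) : ℝ)
        ≤ ∑ t ∈ Icc 1 #F, (#(S • levelSet π F t \ levelSet π F t) : ℝ) :=
          sum_le_sum_of_subset_of_nonneg (filter_subset _ _) fun _ _ _ => Nat.cast_nonneg _
      _ ≤ #(S • F \ F) := by exact_mod_cast sum_card_smul_levelSet_sdiff_le hπ S F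
      _ ≤ ε * #F := hfol
      _ = ∑ t ∈ T, ε * #(levelSet π F t) := by
        have hlayer : (#F : ℝ) = ∑ t ∈ Icc 1 #F, (#(levelSet π F t) : ℝ) := by
          exact_mod_cast (sum_card_levelSet F le_rfl).symm
        rw [sum_filter_of_ne fun t _ ht => nonempty_of_ne_empty fun h => by simp [h] at ht,
          ← mul_sum, hlayer]
  obtain ⟨t, ht, hle⟩ := exists_le_of_sum_le hT havg
  obtain ⟨htIcc, hne⟩ := mem_filter.1 ht
  refine ⟨levelSet π F t, hne, ?_, hle⟩
  calc #(levelSet π F t) ≤ ∑ t ∈ Icc 1 #F, #(levelSet π F t) :=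
        single_le_sum (f := fun t => #(levelSet π F t)) (fun _ _ => Nat.zero_le _) htIcc
    _ = #F := sum_card_levelSet F le_rfl

end LevelSet

section Schreier

variable {G Ω : Type*} [Group G] [MulAction G Ω] [Finite Ω]

theorem schreierIso_nonneg (S : Set G) : 0 ≤ schreierIso G Ω S :=
  Real.sInf_nonneg <| by
    rintro r ⟨X, -, -, rfl⟩
    positivity

theorem schreierIso_le_card_smul_sdiff_div [DecidableEq Ω] (S : Finset G) {X : Finset Ω}
    (hX : X.Nonempty) (hX2 : 2 * #X ≤ Nat.card Ω) :
    schreierIso G Ω S ≤ #(S • X \ X) / #X := by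
  have hbdry : {y | ∃ x ∈ (X : Set Ω), ∃ s ∈ (S : Set G), y = s • x} \ (X : Set Ω) =
      ↑(S • X \ X) := by
    ext y
    simp only [coe_sdiff, Finset.coe_smul, Set.mem_sdiff, Set.mem_smul, Set.mem_ofPred_eq]
    exact and_congr_left' ⟨fun ⟨x, hx, s, hs, h⟩ => ⟨s, hs, x, hx, h.symm⟩,
      fun ⟨s, hs, x, hx, h⟩ => ⟨x, hx, s, hs, h.symm⟩⟩
  refine csInf_le ⟨0, ?_⟩ ⟨X, hX, by rwa [Nat.card_coe_set_eq, Set.ncard_coe_finset], ?_⟩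
  · rintro r ⟨Y, -, -, rfl⟩
    positivity
  · simp only [hbdry, Nat.card_coe_set_eq, Set.ncard_coe_finset]

theorem IsInvariantMean.exists_schreierIso_le {m : Set G → ℝ} (hm : IsInvariantMean G G m)
    (S : Finset G) {ε : ℝ} (hε : 0 < ε) :
    ∃ N : ℕ, ∀ (Ω : Type*) [MulAction G Ω] [Finite Ω], N ≤ Nat.card Ω →
      schreierIso G Ω S ≤ ε := by
  classical
  obtain ⟨F, hF, hfol⟩ := hm.exists_card_smul_sdiff_le S hε
  refine ⟨2 * #F, fun Ω _ _ hΩ => ?_⟩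
  have hFpos : 0 < #F := hF.card_pos
  obtain ⟨ω⟩ : Nonempty Ω := (Nat.card_pos_iff.1 (by omega)).1
  have := Fintype.ofFinite Ω
  obtain ⟨X, hX, hXF, hXbdry⟩ := exists_card_smul_sdiff_le_of_card_smul_sdiff_le
    (π := (· • ω)) (fun g h => mul_smul g h ω) S hF hfol
  calc schreierIso G Ω S ≤ #(S • X \ X) / #X :=
        schreierIso_le_card_smul_sdiff_div S hX (by omega)
    _ ≤ ε := by rwa [div_le_iff₀ (by exact_mod_cast hX.card_pos)]

end Schreier

theorem amenable_no_expanders_general (G : Type*) [Group G]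
    (hamen : ∃ m : Set G → ℝ, IsInvariantMean G G m)
    (Ω : ℕ → Type*) [∀ n, MulAction G (Ω n)] [∀ n, Finite (Ω n)]
    (hcard : Tendsto (fun n => Nat.card (Ω n)) atTop atTop)
    (S : Set G) (hSfin : S.Finite) :
    liminf (fun n => schreierIso G (Ω n) S) atTop = 0 := by
  obtain ⟨m, hm⟩ := hamen
  lift S to Finset G using hSfin
  refine Tendsto.liminf_eq <| tendsto_order.2
    ⟨fun a ha => .of_forall fun n => ha.trans_le (schreierIso_nonneg _), fun ε hε => ?_⟩
  obtain ⟨N, hN⟩ := hm.exists_schreierIso_le S (half_pos hε)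
  filter_upwards [hcard.eventually_ge_atTop N] with n hn
  exact (hN (Ω n) hn).trans_lt (half_lt_self hε)

/-- An infinite amenable group acting on finite sets of unbounded size, with a fixed
finite symmetric set `S`, does not produce expander Schreier graphs: the isoperimetric
numbers have `liminf` equal to `0`. -/
theorem amenable_no_expanders (G : Type*) [Group G] [Infinite G]
    (hamen : ∃ m : Set G → ℝ, IsInvariantMean G G m)
    (Ω : ℕ → Type*) [∀ n, MulAction G (Ω n)] [∀ n, Finite (Ω n)]
    (hcard : Tendsto (fun n => Nat.card (Ω n)) atTop atTop)
    (S : Set G) (hSfin : S.Finite) (hSsym : ∀ s ∈ S, s⁻¹ ∈ S) :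
    liminf (fun n => schreierIso G (Ω n) S) atTop = 0 :=
  amenable_no_expanders_general G hamen Ω hcard S hSfin
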